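/- arXiv:2603.19981 — 2 statements merged into one kernel-verified Lean document; each statement's English description precedes it below -/
import Mathlib

section
/- Let b ≥ 2 and let f : ℕ → Ω be a partial function defined on [0, b) such that for ε ∈ {0,1}, f(n) = ε if and only if n = ε. Define O_f^b as above. Then for all n: b divides n if and only if Ω divides O_f^b(n), and b² divides n if and only if Ω² divides O_f^b(n). -/
/-- `Ω`, the first uncountable ordinal. -/
noncomputable def Omega : Ordinal := (Cardinal.aleph 1).ord

/-- `n =_b b^e·a + r` is the `b`-decomposition of `n`. -/
def BDecomp (b n e a r : ℕ) : Prop :=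
  n = b ^ e * a + r ∧ b ^ e ≤ n ∧ n < b ^ (e + 1) ∧ 0 < a ∧ a < b ∧ r < b ^ e

/-!
Write `n = b^e·a + r`, so that `O n = Ω^(O e)·f a + O r`. For `k ∈ {1, 2}` and `n ≥ b^k` we have
`e ≥ k` and `O e ≥ k`, hence `b^k ∣ b^e·a` and `Ω^k ∣ Ω^(O e)·f a`; since divisibility of a sum by a
divisor of its first summand reduces to the second summand, both sides pass from `n` to `r < n`.
For `n < b^k` both sides say `n = 0`, because then `O n < Ω^k` and `O` vanishes only at `0`.
-/

open Ordinal

lemma natCast_lt_Omega (n : ℕ) : (n : Ordinal) < Omega := by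
  rw [Omega, Cardinal.lt_ord, Ordinal.card_nat]
  exact Cardinal.natCast_lt_aleph0.trans_le (Cardinal.aleph0_le_aleph 1)

lemma Omega_pos : 0 < Omega := by simpa using natCast_lt_Omega 0

lemma Omega_le_sq : Omega ≤ Omega ^ 2 := by
  rw [pow_two]
  exact le_mul_left _ Omega_pos

lemma Ordinal.eq_zero_of_dvd_of_lt {a b : Ordinal} (h : a ∣ b) (hb : b < a) : b = 0 :=
  by_contra fun h0 => (le_of_dvd h0 h).not_gt hb

lemma bDecomp_log {b n : ℕ} (hb : 1 < b) (hn : n ≠ 0) :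
    BDecomp b n (Nat.log b n) (n / b ^ Nat.log b n) (n % b ^ Nat.log b n) := by
  have hpos : 0 < b ^ Nat.log b n := pow_pos (by omega) _
  have hle : b ^ Nat.log b n ≤ n := Nat.pow_log_le_self b hn
  have hlt : n < b ^ (Nat.log b n + 1) := Nat.lt_pow_succ_log_self hb n
  refine ⟨(Nat.div_add_mod n _).symm, hle, hlt, Nat.div_pos hle hpos, ?_, Nat.mod_lt _ hpos⟩
  rwa [Nat.div_lt_iff_lt_mul hpos, ← pow_succ']

/-- `O` satisfies the recursion defining `O_f^b`. -/
structure IsOmegaExpansion (b : ℕ) (f O : ℕ → Ordinal) : Prop where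
  eq_of_lt : ∀ n < b, O n = f n
  eq_of_bDecomp : ∀ n e a r, b ≤ n → BDecomp b n e a r → O n = Omega ^ O e * f a + O r

namespace IsOmegaExpansion

variable {b : ℕ} {f O : ℕ → Ordinal}

theorem eq_opow_mul_add (hO : IsOmegaExpansion b f O) (hb : 1 < b) {n : ℕ} (hn : b ≤ n) :
    O n = Omega ^ O (Nat.log b n) * f (n / b ^ Nat.log b n) + O (n % b ^ Nat.log b n) :=
  hO.eq_of_bDecomp n _ _ _ hn (bDecomp_log hb (by omega))

theorem eq_zero_iff (hO : IsOmegaExpansion b f O) (hb : 1 < b)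
    (hf0 : ∀ n < b, f n = 0 ↔ n = 0) {n : ℕ} : O n = 0 ↔ n = 0 := by
  rcases lt_or_ge n b with hnb | hnb
  · rw [hO.eq_of_lt n hnb, hf0 n hnb]
  · obtain ⟨-, -, -, ha, hab, -⟩ := bDecomp_log hb (n := n) (by omega)
    have hfa : f (n / b ^ Nat.log b n) ≠ 0 := fun h => ha.ne' ((hf0 _ hab).1 h)
    rw [hO.eq_opow_mul_add hb hnb, Ordinal.add_eq_zero_iff, mul_eq_zero]
    simp only [Ordinal.opow_ne_zero _ Omega_pos.ne', hfa, or_self, false_and, false_iff]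
    omega

theorem Omega_le (hO : IsOmegaExpansion b f O) (hb : 1 < b)
    (hf0 : ∀ n < b, f n = 0 ↔ n = 0) {n : ℕ} (hn : b ≤ n) : Omega ≤ O n := by
  obtain ⟨-, -, -, ha, hab, -⟩ := bDecomp_log hb (n := n) (by omega)
  have hOe : 0 < O (Nat.log b n) :=
    pos_iff_ne_zero.2 ((hO.eq_zero_iff hb hf0).not.2 (Nat.log_pos hb hn).ne')
  have hfa : 0 < f (n / b ^ Nat.log b n) :=
    pos_iff_ne_zero.2 fun h => ha.ne' ((hf0 _ hab).1 h)
  rw [hO.eq_opow_mul_add hb hn]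
  calc Omega ≤ Omega ^ O (Nat.log b n) := left_le_opow _ hOe
    _ ≤ Omega ^ O (Nat.log b n) * f (n / b ^ Nat.log b n) := le_mul_left _ hfa
    _ ≤ _ := le_self_add

theorem two_le (hO : IsOmegaExpansion b f O) (hb : 1 < b)
    (hf0 : ∀ n < b, f n = 0 ↔ n = 0) (hf1 : ∀ n < b, f n = 1 ↔ n = 1) {n : ℕ} (hn : 2 ≤ n) :
    2 ≤ O n := by
  rcases lt_or_ge n b with hnb | hnb
  · rw [hO.eq_of_lt n hnb, ← one_add_one_eq_two, Order.add_one_le_iff]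
    refine lt_of_le_of_ne (Order.one_le_iff_ne_zero.2 fun h => ?_) fun h => ?_
    · have := (hf0 n hnb).1 h; omega
    · have := (hf1 n hnb).1 h.symm; omega
  · exact_mod_cast (natCast_lt_Omega 2).le.trans (hO.Omega_le hb hf0 hnb)

theorem lt_Omega_sq (hO : IsOmegaExpansion b f O) (hb : 1 < b)
    (hfΩ : ∀ n < b, f n < Omega) (hf1 : f 1 = 1) {n : ℕ} (hn : n < b ^ 2) :
    O n < Omega ^ 2 := by
  rcases lt_or_ge n b with hnb | hnb
  · rw [hO.eq_of_lt n hnb]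
    exact (hfΩ n hnb).trans_le Omega_le_sq
  · obtain ⟨-, -, -, -, hab, hr⟩ := bDecomp_log hb (n := n) (by omega)
    have he : Nat.log b n = 1 := by
      have := Nat.log_pos hb hnb
      have := Nat.log_lt_of_lt_pow (by omega) hn
      omega
    rw [hO.eq_opow_mul_add hb hnb]
    rw [he, pow_one] at hab hr ⊢
    rw [hO.eq_of_lt 1 hb, hf1, opow_one, hO.eq_of_lt _ hr, pow_two]
    calc Omega * f (n / b) + f (n % b) < Omega * f (n / b) + Omega :=
          add_lt_add_right (hfΩ _ hr) _
      _ = Omega * (f (n / b) + 1) := by rw [mul_add, mul_one]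
      _ ≤ Omega * Omega := mul_le_mul_right (Order.add_one_le_of_lt (hfΩ _ hab)) _

theorem pow_dvd_iff (hO : IsOmegaExpansion b f O) (hb : 1 < b)
    (hf0 : ∀ n < b, f n = 0 ↔ n = 0) {k : ℕ} (hk : k ≠ 0)
    (hlt : ∀ n < b ^ k, O n < Omega ^ k) (hle : ∀ e, k ≤ e → (k : Ordinal) ≤ O e) (n : ℕ) :
    b ^ k ∣ n ↔ Omega ^ k ∣ O n := by
  induction n using Nat.strong_induction_on with
  | _ n ih =>
  rcases lt_or_ge n (b ^ k) with hn | hn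
  · calc b ^ k ∣ n ↔ n = 0 := ⟨fun h => Nat.eq_zero_of_dvd_of_lt h hn, fun h => h ▸ dvd_zero _⟩
      _ ↔ O n = 0 := (hO.eq_zero_iff hb hf0).symm
      _ ↔ Omega ^ k ∣ O n :=
        ⟨fun h => h ▸ dvd_zero _, fun h => eq_zero_of_dvd_of_lt h (hlt n hn)⟩
  · have hbn : b ≤ n := (Nat.le_self_pow hk b).trans hn
    obtain ⟨-, hle_n, -, -, -, hr⟩ := bDecomp_log hb (n := n) (by omega)
    have hke : k ≤ Nat.log b n := Nat.le_log_of_pow_le hb hn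
    have hΩk : Omega ^ k ∣ Omega ^ O (Nat.log b n) * f (n / b ^ Nat.log b n) := by
      rw [← opow_natCast]
      exact (opow_dvd_opow _ (hle _ hke)).mul_right _
    calc b ^ k ∣ n ↔ b ^ k ∣ n % b ^ Nat.log b n := (Nat.dvd_mod_iff (pow_dvd_pow b hke)).symm
      _ ↔ Omega ^ k ∣ O (n % b ^ Nat.log b n) := ih _ (hr.trans_le hle_n)
      _ ↔ Omega ^ k ∣ O n := by rw [hO.eq_opow_mul_add hb hbn, dvd_add_iff hΩk]

end IsOmegaExpansion

/-- if `f` maps `[0,b)` into `Ω` and satisfies `f(n) = ε ↔ n = ε`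
for `ε ∈ {0,1}`, then for all `n`: `b ∣ n ↔ Ω ∣ O_f^b(n)` and
`b² ∣ n ↔ Ω² ∣ O_f^b(n)`. -/
theorem stmt2 (b : ℕ) (hb : 2 ≤ b) (f : ℕ → Ordinal)
    (hfOm : ∀ n < b, f n < Omega)
    (hf01 : ∀ n < b, (f n = 0 ↔ n = 0) ∧ (f n = 1 ↔ n = 1))
    (O : ℕ → Ordinal)
    (hOsmall : ∀ n < b, O n = f n)
    (hObig : ∀ n e a r, b ≤ n → BDecomp b n e a r →
      O n = Omega ^ O e * f a + O r) :
    ∀ n : ℕ, ((b ∣ n) ↔ Omega ∣ O n) ∧ ((b ^ 2 ∣ n) ↔ Omega ^ 2 ∣ O n) := by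
  have hO : IsOmegaExpansion b f O := ⟨hOsmall, hObig⟩
  have hf0 : ∀ n < b, f n = 0 ↔ n = 0 := fun n hn => (hf01 n hn).1
  have hf1 : ∀ n < b, f n = 1 ↔ n = 1 := fun n hn => (hf01 n hn).2
  intro n
  constructor
  · have hlt : ∀ m < b ^ 1, O m < Omega ^ 1 := fun m hm => by
      rw [pow_one] at hm ⊢
      exact hO.eq_of_lt m hm ▸ hfOm m hm
    have hle : ∀ e, 1 ≤ e → ((1 : ℕ) : Ordinal) ≤ O e := fun e he => by
      rw [Nat.cast_one, Order.one_le_iff_ne_zero, Ne, hO.eq_zero_iff hb hf0]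
      omega
    simpa only [pow_one] using hO.pow_dvd_iff hb hf0 one_ne_zero hlt hle n
  · refine hO.pow_dvd_iff hb hf0 two_ne_zero (fun m hm => ?_) (fun e he => ?_) n
    · exact hO.lt_Omega_sq hb hfOm ((hf1 1 hb).2 rfl) hm
    · exact_mod_cast hO.two_le hb hf0 hf1 he
end

section
/- Let B, C be base hierarchies with min B ≤ min C, let n ≥ min B, and let b = base_B(n). The witness c for the upgrade ↑_B^C(n) exists if and only if there is a least c' ∈ C such that c' ≥ ↑b and ⌈b→c'⌉(n) < S_C(c'); and in that case c' = c. -/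
/-- `c = S_B(b)`, the successor of `b` in `B` (when it exists). -/
def SuccIn (B : Set ℕ) (b c : ℕ) : Prop := IsLeast {x | x ∈ B ∧ b < x} c

/-- A base hierarchy: a nonempty set of naturals `≥ 2` in which every element
divides its successor (`b ∣ S_B(b)`; vacuous when `S_B(b) = ∞`). -/
def IsBaseHierarchy (B : Set ℕ) : Prop :=
  B.Nonempty ∧ (∀ b ∈ B, 2 ≤ b) ∧ ∀ b ∈ B, ∀ c, SuccIn B b c → b ∣ c

/-- `b = base_B(n)`: the largest element of `B` that is `≤ n`, or `min B` if
`n < min B`. -/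
def IsBaseOf (B : Set ℕ) (n b : ℕ) : Prop :=
  ((∃ x ∈ B, x ≤ n) ∧ IsGreatest {x | x ∈ B ∧ x ≤ n} b) ∨
  ((∀ x ∈ B, n < x) ∧ IsLeast B b)

/-- `n` is `B`-critical if `base_B(n) ∣ n`. -/
def Critical (B : Set ℕ) (n : ℕ) : Prop := ∃ b, IsBaseOf B n b ∧ b ∣ n

/-- `ChgGood Up Chg C n b c`: the base `c` "works" for upgrading `n`:
`↑(n−1) < ⌈b→c⌉(n) < S_C(c)`. -/
def ChgGood (Up : ℕ → ℕ → Prop) (Chg : ℕ → ℕ → ℕ → ℕ → Prop) (C : Set ℕ)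
    (n b c : ℕ) : Prop :=
  ∃ p k, Up (n - 1) p ∧ Chg b c n k ∧ p < k ∧ ∀ d, SuccIn C c d → k < d

/-- `c` is the witness for `↑n`: the least element of `C` with
`↑(n−1) < ⌈b→c⌉(n) < S_C(c)`. -/
def IsWitness (Up : ℕ → ℕ → Prop) (Chg : ℕ → ℕ → ℕ → ℕ → Prop) (C : Set ℕ)
    (n b c : ℕ) : Prop :=
  c ∈ C ∧ ChgGood Up Chg C n b c ∧
    ∀ c' ∈ C, c' < c → ¬ ChgGood Up Chg C n b c'

/-!
Write `↑` for `Up`, `⌈b→c⌉` for `Chg b c` and `S(c)` for the successor of `c` in `C`; on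
`[b, n]` the base is always `b`, and `↑b` is the witness for `b` itself since `⌈b→c⌉(b) = c`.

Every `x ∈ C` that works for some `m ∈ [b, n]` satisfies `x ≥ ↑b`: inductively the witness `c₁`
for `m - 1` is `≥ ↑b`, and `c₁ ≤ ⌈b→c₁⌉(m - 1) = ↑(m - 1) < ⌈b→x⌉(m) < S(x)` forces `c₁ ≤ x`.
Conversely, for `y ≥ ↑b` the map `⌈b→y⌉` is strictly increasing (the digits below `b` are sent
below `y`), so if moreover `⌈b→y⌉(n) < S(y)`, then `y` works for every `m ∈ (b, n]` as soon as
`↑(m - 1) ≤ ⌈b→y⌉(m - 1)`; the witness for `m` is then `≤ y`, and monotonicity of `⌈b→·⌉(m)`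
in the target base propagates `↑m ≤ ⌈b→y⌉(m)`. Hence the bases that work for `n` are exactly
the elements of the candidate set, and the two least elements coincide.
-/

structure IsUpgrade (B C : Set ℕ) (Up : ℕ → ℕ → Prop) (Chg : ℕ → ℕ → ℕ → ℕ → Prop) :
    Prop where
  two_le_of_mem_left : ∀ b ∈ B, 2 ≤ b
  two_le_of_mem_right : ∀ c ∈ C, 2 ≤ c
  up_iff_of_lt : ∀ n m, (∀ x ∈ B, n < x) → (Up n m ↔ m = n)
  chg_iff_of_lt : ∀ b c m k, m < b → (Chg b c m k ↔ Up m k)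
  chg_iff_of_le : ∀ b c m k, b ≤ m →
    (Chg b c m k ↔ ∃ e a r, BDecomp b m e a r ∧
      ∃ e' a' r', Chg b c e e' ∧ Up a a' ∧ Chg b c r r' ∧ k = c ^ e' * a' + r')
  up_iff_of_le : ∀ n, (∃ x ∈ B, x ≤ n) → ∀ b, IsBaseOf B n b → ∀ m,
    (Up n m ↔ ∃ c, IsWitness Up Chg C n b c ∧ Chg b c n m)

namespace BDecomp

variable {b n e a r e' a' r' : ℕ}

theorem two_le (h : BDecomp b n e a r) : 2 ≤ b := by
  obtain ⟨-, -, -, ha, hab, -⟩ := h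
  omega

theorem exp_eq_log (h : BDecomp b n e a r) : e = Nat.log b n :=
  (Nat.log_eq_of_pow_le_of_lt_pow h.2.1 h.2.2.1).symm

theorem digit_eq_and_rem_eq (h : BDecomp b n e a r) : a = n / b ^ e ∧ r = n % b ^ e := by
  obtain ⟨hn, -, -, -, -, hr⟩ := h
  have := (Nat.div_mod_unique (a := n) (d := a) (by omega)).2 ⟨by rw [hn, add_comm], hr⟩
  exact ⟨this.1.symm, this.2.symm⟩

theorem unique (h : BDecomp b n e a r) (h' : BDecomp b n e' a' r') :
    e = e' ∧ a = a' ∧ r = r' := by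
  obtain rfl : e = e' := h.exp_eq_log.trans h'.exp_eq_log.symm
  obtain ⟨rfl, rfl⟩ := h.digit_eq_and_rem_eq
  obtain ⟨rfl, rfl⟩ := h'.digit_eq_and_rem_eq
  exact ⟨rfl, rfl, rfl⟩

theorem exists_of_ne_zero (hb : 2 ≤ b) (hn : n ≠ 0) :
    ∃ e a r, BDecomp b n e a r := by
  set e := Nat.log b n
  have hle : b ^ e ≤ n := Nat.pow_log_le_self b hn
  have hlt : n < b ^ (e + 1) := Nat.lt_pow_succ_log_self hb n
  have hpos : 0 < b ^ e := pow_pos (by omega) e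
  refine ⟨e, n / b ^ e, n % b ^ e, (Nat.div_add_mod n (b ^ e)).symm, hle, hlt,
    (Nat.one_le_div_iff hpos).2 hle, ?_, Nat.mod_lt n hpos⟩
  rw [Nat.div_lt_iff_lt_mul hpos, ← pow_succ']
  exact hlt

theorem exp_lt (h : BDecomp b n e a r) : e < n :=
  calc e < 2 ^ e := Nat.lt_two_pow_self
    _ ≤ b ^ e := Nat.pow_le_pow_left h.two_le e
    _ ≤ n := h.2.1

theorem rem_lt (h : BDecomp b n e a r) : r < n := lt_of_lt_of_le h.2.2.2.2.2 h.2.1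

theorem one_le_exp (h : BDecomp b n e a r) (hbn : b ≤ n) : 1 ≤ e := by
  rcases Nat.eq_zero_or_pos e with rfl | he
  · have := h.2.2.1
    rw [zero_add, pow_one] at this
    omega
  · exact he

theorem pred_of_rem_pos (h : BDecomp b n e a r) (hr : 0 < r) : BDecomp b (n - 1) e a (r - 1) := by
  obtain ⟨hn, hle, hlt, ha, hab, hrlt⟩ := h
  have : b ^ e ≤ b ^ e * a := Nat.le_mul_of_pos_right _ ha
  exact ⟨by omega, by omega, by omega, ha, hab, by omega⟩

end BDecomp

theorem bDecomp_self {b : ℕ} (hb : 2 ≤ b) : BDecomp b b 1 1 0 := by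
  refine ⟨by simp, by simp, ?_, one_pos, by omega, by simp; omega⟩
  rw [pow_succ, pow_one]
  nlinarith

theorem bDecomp_pow_mul_sub_one {b e a : ℕ} (ha : 2 ≤ a) (hab : a ≤ b) :
    BDecomp b (b ^ e * a - 1) e (a - 1) (b ^ e - 1) := by
  have hpos : 0 < b ^ e := pow_pos (by omega) e
  have hsplit : b ^ e * a = b ^ e * (a - 1) + b ^ e := by
    rw [← Nat.mul_add_one, Nat.sub_add_cancel (by omega)]
  have hge : b ^ e ≤ b ^ e * (a - 1) := Nat.le_mul_of_pos_right _ (by omega)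
  have hbound : b ^ e * a ≤ b ^ (e + 1) := by
    rw [pow_succ]
    exact Nat.mul_le_mul_left _ hab
  exact ⟨by omega, by omega, by omega, by omega, by omega, by omega⟩

theorem IsBaseOf.mem {B : Set ℕ} {n b : ℕ} (h : IsBaseOf B n b) : b ∈ B := by
  rcases h with ⟨-, ⟨hb, -⟩, -⟩ | ⟨-, hb, -⟩
  · exact hb
  · exact hb

theorem IsBaseOf.le {B : Set ℕ} {n b : ℕ} (h : IsBaseOf B n b) (hn : ∃ x ∈ B, x ≤ n) :
    b ≤ n := by
  rcases h with ⟨-, ⟨-, hbn⟩, -⟩ | ⟨hlt, -⟩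
  · exact hbn
  · obtain ⟨x, hx, hxn⟩ := hn
    have := hlt x hx
    omega

theorem IsBaseOf.of_le {B : Set ℕ} {n m b : ℕ} (h : IsBaseOf B n b) (hbm : b ≤ m)
    (hmn : m ≤ n) : IsBaseOf B m b := by
  rcases h with ⟨-, ⟨hb, -⟩, hmax⟩ | ⟨hlt, hb, -⟩
  · exact Or.inl ⟨⟨b, hb, hbm⟩, ⟨hb, hbm⟩, fun x hx => hmax ⟨hx.1, hx.2.trans hmn⟩⟩
  · have := hlt b hb
    omega

theorem exists_isBaseOf {B : Set ℕ} {n : ℕ} (hn : ∃ x ∈ B, x ≤ n) : ∃ b, IsBaseOf B n b := by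
  have hbdd : BddAbove {x | x ∈ B ∧ x ≤ n} := ⟨n, fun _ hx => hx.2⟩
  exact ⟨_, Or.inl ⟨hn, Nat.sSup_mem hn hbdd, fun _ hx => le_csSup hbdd hx⟩⟩

theorem exists_succIn_le {C : Set ℕ} {x z : ℕ} (hz : z ∈ C) (hxz : x < z) :
    ∃ d, SuccIn C x d ∧ d ≤ z :=
  ⟨sInf {w | w ∈ C ∧ x < w}, ⟨Nat.sInf_mem ⟨z, hz, hxz⟩, fun _ hw => Nat.sInf_le hw⟩,
    Nat.sInf_le ⟨hz, hxz⟩⟩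

section Witness

variable {Up : ℕ → ℕ → Prop} {Chg : ℕ → ℕ → ℕ → ℕ → Prop} {C : Set ℕ} {n b c c' x : ℕ}

theorem IsWitness.unique (h : IsWitness Up Chg C n b c) (h' : IsWitness Up Chg C n b c') :
    c = c' := by
  rcases lt_trichotomy c c' with hlt | heq | hlt
  · exact absurd h.2.1 (h'.2.2 c h.1 hlt)
  · exact heq
  · exact absurd h'.2.1 (h.2.2 c' h'.1 hlt)

theorem exists_isWitness_le (hx : x ∈ C) (hgood : ChgGood Up Chg C n b x) :
    ∃ c, IsWitness Up Chg C n b c ∧ c ≤ x := by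
  set S := {y | y ∈ C ∧ ChgGood Up Chg C n b y}
  have hmem : sInf S ∈ S := Nat.sInf_mem ⟨x, hx, hgood⟩
  exact ⟨sInf S, ⟨hmem.1, hmem.2, fun y hy hlt hy' => Nat.notMem_of_lt_sInf hlt ⟨hy, hy'⟩⟩,
    Nat.sInf_le ⟨hx, hgood⟩⟩

end Witness

def witnessCandidates (Up : ℕ → ℕ → Prop) (Chg : ℕ → ℕ → ℕ → ℕ → Prop) (C : Set ℕ)
    (n b : ℕ) : Set ℕ :=
  {x | x ∈ C ∧ (∃ ub, Up b ub ∧ ub ≤ x) ∧ ∃ k, Chg b x n k ∧ ∀ d, SuccIn C x d → k < d}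

namespace IsUpgrade

variable {B C : Set ℕ} {Up : ℕ → ℕ → Prop} {Chg : ℕ → ℕ → ℕ → ℕ → Prop}
  {n m j b β c d x y e a r k k' kn v p q q' ub : ℕ}

theorem up_iff_of_lt_two (h : IsUpgrade B C Up Chg) (hm : m < 2) : Up m q ↔ q = m :=
  h.up_iff_of_lt m q fun x hx => lt_of_lt_of_le hm (h.two_le_of_mem_left x hx)

theorem chg_iff_of_lt_two (h : IsUpgrade B C Up Chg) (hb : 2 ≤ b) (hm : m < 2) :
    Chg b c m k ↔ k = m := by
  rw [h.chg_iff_of_lt b c m k (by omega), h.up_iff_of_lt_two hm]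

theorem chg_iff_of_bDecomp (h : IsUpgrade B C Up Chg) (hd : BDecomp b m e a r) (hbm : b ≤ m) :
    Chg b c m k ↔ ∃ E A R, Chg b c e E ∧ Up a A ∧ Chg b c r R ∧ k = c ^ E * A + R := by
  rw [h.chg_iff_of_le b c m k hbm]
  constructor
  · rintro ⟨e', a', r', hd', hchg⟩
    obtain ⟨rfl, rfl, rfl⟩ := hd.unique hd'
    exact hchg
  · exact fun hchg => ⟨e, a, r, hd, hchg⟩

theorem up_unique_and_chg_unique (h : IsUpgrade B C Up Chg) (m : ℕ) :
    (∀ q q', Up m q → Up m q' → q = q') ∧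
      ∀ β c k k', Chg β c m k → Chg β c m k' → k = k' := by
  induction m using Nat.strong_induction_on with
  | _ m IH =>
  have chg_unique_of_le : ∀ β c k k', β ≤ m → Chg β c m k → Chg β c m k' → k = k' := by
    intro β c k k' hβm hk hk'
    obtain ⟨e, a, r, hd, -⟩ := (h.chg_iff_of_le β c m k hβm).1 hk
    obtain ⟨E, A, R, hE, hA, hR, rfl⟩ := (h.chg_iff_of_bDecomp hd hβm).1 hk
    obtain ⟨E', A', R', hE', hA', hR', rfl⟩ := (h.chg_iff_of_bDecomp hd hβm).1 hk'
    have ham : a < m := by have := hd.2.2.2.2.1; omega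
    rw [(IH e hd.exp_lt).2 _ _ _ _ hE hE', (IH a ham).1 _ _ hA hA',
      (IH r hd.rem_lt).2 _ _ _ _ hR hR']
  have up_unique : ∀ q q', Up m q → Up m q' → q = q' := by
    intro q q' hq hq'
    by_cases hB : ∃ x ∈ B, x ≤ m
    · obtain ⟨β, hβ⟩ := exists_isBaseOf hB
      obtain ⟨c, hc, hq⟩ := (h.up_iff_of_le m hB β hβ q).1 hq
      obtain ⟨c', hc', hq'⟩ := (h.up_iff_of_le m hB β hβ q').1 hq'
      rw [hc.unique hc'] at hq
      exact chg_unique_of_le β c' q q' (hβ.le hB) hq hq'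
    · push Not at hB
      rw [(h.up_iff_of_lt m q hB).1 hq, (h.up_iff_of_lt m q' hB).1 hq']
  refine ⟨up_unique, fun β c k k' hk hk' => ?_⟩
  rcases lt_or_ge m β with hmβ | hβm
  · exact up_unique k k' ((h.chg_iff_of_lt β c m k hmβ).1 hk)
      ((h.chg_iff_of_lt β c m k' hmβ).1 hk')
  · exact chg_unique_of_le β c k k' hβm hk hk'

theorem up_unique (h : IsUpgrade B C Up Chg) (hq : Up m q) (hq' : Up m q') : q = q' :=
  (h.up_unique_and_chg_unique m).1 q q' hq hq'

theorem chg_unique (h : IsUpgrade B C Up Chg) (hk : Chg β c m k) (hk' : Chg β c m k') :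
    k = k' :=
  (h.up_unique_and_chg_unique m).2 β c k k' hk hk'

theorem one_le_chg_of_le (h : IsUpgrade B C Up Chg) (hc : 1 ≤ c) (hβm : β ≤ m)
    (hup : ∀ a < m, 0 < a → ∀ A, Up a A → 1 ≤ A) (hk : Chg β c m k) : 1 ≤ k := by
  obtain ⟨e, a, r, hd, E, A, R, -, hA, -, rfl⟩ := (h.chg_iff_of_le β c m k hβm).1 hk
  have hA1 : 1 ≤ A := hup a (by have := hd.2.2.2.2.1; omega) hd.2.2.2.1 A hA
  have := Nat.mul_le_mul (Nat.one_le_pow E c hc) hA1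
  omega

theorem one_le_up (h : IsUpgrade B C Up Chg) (hm : 0 < m) (hq : Up m q) : 1 ≤ q := by
  induction m using Nat.strong_induction_on generalizing q with
  | _ m IH =>
  by_cases hB : ∃ x ∈ B, x ≤ m
  · obtain ⟨β, hβ⟩ := exists_isBaseOf hB
    obtain ⟨c, hc, hq⟩ := (h.up_iff_of_le m hB β hβ q).1 hq
    have hc2 := h.two_le_of_mem_right c hc.1
    exact h.one_le_chg_of_le (by omega) (hβ.le hB) (fun a ha ha0 _ hA => IH a ha ha0 hA) hq
  · push Not at hB
    rw [(h.up_iff_of_lt m q hB).1 hq]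
    exact hm

theorem one_le_chg (h : IsUpgrade B C Up Chg) (hc : 1 ≤ c) (hm : 0 < m)
    (hk : Chg β c m k) : 1 ≤ k := by
  rcases lt_or_ge m β with hmβ | hβm
  · exact h.one_le_up hm ((h.chg_iff_of_lt β c m k hmβ).1 hk)
  · exact h.one_le_chg_of_le hc hβm (fun _ _ ha _ hA => h.one_le_up ha hA) hk

theorem le_chg (h : IsUpgrade B C Up Chg) (hc : 1 ≤ c) (hbm : b ≤ m) (hk : Chg b c m k) :
    c ≤ k := by
  obtain ⟨e, a, r, hd, E, A, R, hE, hA, -, rfl⟩ := (h.chg_iff_of_le b c m k hbm).1 hk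
  have hE1 : 1 ≤ E := h.one_le_chg hc (hd.one_le_exp hbm) hE
  have hA1 : 1 ≤ A := h.one_le_up hd.2.2.2.1 hA
  calc c ≤ c ^ E := Nat.le_self_pow (by omega) c
    _ ≤ c ^ E * A := Nat.le_mul_of_pos_right _ hA1
    _ ≤ c ^ E * A + R := Nat.le_add_right _ _

theorem chg_self_iff (h : IsUpgrade B C Up Chg) (hb : 2 ≤ b) : Chg b c b k ↔ k = c := by
  rw [h.chg_iff_of_bDecomp (bDecomp_self hb) le_rfl]
  simp only [h.chg_iff_of_lt_two (m := 1) hb one_lt_two, h.chg_iff_of_lt_two (m := 0) hb two_pos,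
    h.up_iff_of_lt_two (m := 1) one_lt_two]
  simp

theorem exists_up_of_up_succ (h : IsUpgrade B C Up Chg) (hq : Up (m + 1) q) : ∃ p, Up m p := by
  by_cases hB : ∃ x ∈ B, x ≤ m + 1
  · obtain ⟨β, hβ⟩ := exists_isBaseOf hB
    obtain ⟨c, ⟨-, ⟨p, -, hp, -⟩, -⟩, -⟩ := (h.up_iff_of_le _ hB β hβ q).1 hq
    exact ⟨p, hp⟩
  · push Not at hB
    exact ⟨m, (h.up_iff_of_lt m m fun x hx => by have := hB x hx; omega).2 rfl⟩

theorem exists_up_of_le (h : IsUpgrade B C Up Chg) (hq : Up m q) (hjm : j ≤ m) :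
    ∃ p, Up j p := by
  induction m generalizing q with
  | zero => exact ⟨q, by rwa [Nat.le_zero.1 hjm]⟩
  | succ m ih =>
    rcases Nat.lt_or_eq_of_le hjm with hlt | rfl
    · obtain ⟨p, hp⟩ := h.exists_up_of_up_succ hq
      exact ih hp (by omega)
    · exact ⟨q, hq⟩

theorem up_lt_up_succ (h : IsUpgrade B C Up Chg) (hp : Up m p) (hq : Up (m + 1) q) : p < q := by
  by_cases hB : ∃ x ∈ B, x ≤ m + 1
  · obtain ⟨β, hβ⟩ := exists_isBaseOf hB
    obtain ⟨c, ⟨-, ⟨p', k, hp', hk, hpk, -⟩, -⟩, hq⟩ := (h.up_iff_of_le _ hB β hβ q).1 hq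
    rw [h.up_unique hp hp', h.chg_unique hq hk]
    exact hpk
  · push Not at hB
    rw [(h.up_iff_of_lt m p fun x hx => by have := hB x hx; omega).1 hp,
      (h.up_iff_of_lt _ q hB).1 hq]
    omega

theorem exists_chg (h : IsUpgrade B C Up Chg) (hb : 2 ≤ b) (hup : ∀ j < b, ∃ q, Up j q)
    (c m : ℕ) : ∃ k, Chg b c m k := by
  induction m using Nat.strong_induction_on with
  | _ m IH =>
  rcases lt_or_ge m b with hmb | hbm
  · obtain ⟨q, hq⟩ := hup m hmb
    exact ⟨q, (h.chg_iff_of_lt b c m q hmb).2 hq⟩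
  · obtain ⟨e, a, r, hd⟩ := BDecomp.exists_of_ne_zero hb (by omega : m ≠ 0)
    obtain ⟨E, hE⟩ := IH e hd.exp_lt
    obtain ⟨A, hA⟩ := hup a hd.2.2.2.2.1
    obtain ⟨R, hR⟩ := IH r hd.rem_lt
    exact ⟨_, (h.chg_iff_of_bDecomp hd hbm).2 ⟨E, A, R, hE, hA, hR, rfl⟩⟩

theorem chg_le_chg_of_target_le (h : IsUpgrade B C Up Chg) (hc : 1 ≤ c) (hcd : c ≤ d)
    (hk : Chg b c m k) (hk' : Chg b d m k') : k ≤ k' := by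
  induction m using Nat.strong_induction_on generalizing k k' with
  | _ m IH =>
  rcases lt_or_ge m b with hmb | hbm
  · exact (h.up_unique ((h.chg_iff_of_lt b c m k hmb).1 hk)
      ((h.chg_iff_of_lt b d m k' hmb).1 hk')).le
  · obtain ⟨e, a, r, hd, -⟩ := (h.chg_iff_of_le b c m k hbm).1 hk
    obtain ⟨E, A, R, hE, hA, hR, rfl⟩ := (h.chg_iff_of_bDecomp hd hbm).1 hk
    obtain ⟨E', A', R', hE', hA', hR', rfl⟩ := (h.chg_iff_of_bDecomp hd hbm).1 hk'
    rw [h.up_unique hA hA']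
    have hpow : c ^ E ≤ d ^ E' :=
      (Nat.pow_le_pow_right hc (IH e hd.exp_lt hE hE')).trans (Nat.pow_le_pow_left hcd E')
    exact Nat.add_le_add (Nat.mul_le_mul_right A' hpow) (IH r hd.rem_lt hR hR')

theorem chg_pow_mul_sub_one_lt (h : IsUpgrade B C Up Chg) (he : 1 ≤ e) (ha : 2 ≤ a)
    (hab : a ≤ b) (hbound : ∀ v E, Chg b y (b ^ e - 1) v → Chg b y e E → v < y ^ E)
    (hv : Chg b y (b ^ e * a - 1) v) :
    ∃ E A, Chg b y e E ∧ Up (a - 1) A ∧ v < y ^ E * (A + 1) := by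
  have hbv : b ≤ b ^ e * a - 1 := by
    have := Nat.le_self_pow (by omega : e ≠ 0) b
    have := Nat.mul_le_mul_left (b ^ e) ha
    omega
  obtain ⟨E, A, R, hE, hA, hR, rfl⟩ :=
    (h.chg_iff_of_bDecomp (bDecomp_pow_mul_sub_one ha hab) hbv).1 hv
  have := hbound R E hR hE
  exact ⟨E, A, hE, hA, by rw [Nat.mul_add_one]; omega⟩

theorem chg_pow_sub_one_lt (h : IsUpgrade B C Up Chg) (hb : 2 ≤ b)
    (hy : ∀ p, Up (b - 1) p → p < y) :
    ∀ e, (∀ M < e, ∀ k k', Chg b y M k → Chg b y (M + 1) k' → k < k') →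
      ∀ v E, Chg b y (b ^ e - 1) v → Chg b y e E → v < y ^ E
  | 0, _, v, E, hv, hE => by
    rw [pow_zero, Nat.sub_self, h.chg_iff_of_lt_two hb two_pos] at hv
    rw [h.chg_iff_of_lt_two hb two_pos] at hE
    simp [hv, hE]
  | 1, _, v, E, hv, hE => by
    rw [pow_one, h.chg_iff_of_lt b y _ v (by omega)] at hv
    rw [h.chg_iff_of_lt_two hb one_lt_two] at hE
    rw [hE, pow_one]
    exact hy v hv
  | e + 2, hstep, v, E, hv, hE => by
    obtain ⟨E₁, A, hE₁, hA, hv⟩ := h.chg_pow_mul_sub_one_lt (e := e + 1) (by omega) hb le_rfl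
      (h.chg_pow_sub_one_lt hb hy (e + 1) fun M hM => hstep M (by omega)) (by rwa [← pow_succ])
    have hAy : A + 1 ≤ y := hy A hA
    have hE₁E : E₁ < E := hstep (e + 1) (by omega) E₁ E hE₁ hE
    calc v < y ^ E₁ * (A + 1) := hv
      _ ≤ y ^ E₁ * y := Nat.mul_le_mul_left _ hAy
      _ = y ^ (E₁ + 1) := (pow_succ y E₁).symm
      _ ≤ y ^ E := Nat.pow_le_pow_right (by omega) hE₁E

theorem chg_lt_chg_succ (h : IsUpgrade B C Up Chg) (hb : 2 ≤ b)
    (hy : ∀ p, Up (b - 1) p → p < y) (M : ℕ) :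
    ∀ {k k'}, Chg b y M k → Chg b y (M + 1) k' → k < k' := by
  induction M using Nat.strong_induction_on with
  | _ M IH =>
  intro k k' hk hk'
  rcases lt_trichotomy (M + 1) b with hlt | rfl | hgt
  · exact h.up_lt_up_succ ((h.chg_iff_of_lt b y M k (by omega)).1 hk)
      ((h.chg_iff_of_lt b y _ k' hlt).1 hk')
  · rw [h.chg_self_iff hb] at hk'
    rw [hk']
    exact hy k (by simpa using (h.chg_iff_of_lt _ y M k (by omega)).1 hk)
  · obtain ⟨e, a, r, hd⟩ := BDecomp.exists_of_ne_zero hb (by omega : M + 1 ≠ 0)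
    obtain ⟨E, A, R, hE, hA, hR, rfl⟩ := (h.chg_iff_of_bDecomp hd hgt.le).1 hk'
    have hstep : ∀ M' < e, ∀ k k', Chg b y M' k → Chg b y (M' + 1) k' → k < k' :=
      fun M' hM' _ _ => IH M' (by have := hd.exp_lt; omega)
    have hbound := h.chg_pow_sub_one_lt hb hy e hstep
    rcases Nat.eq_zero_or_pos r with rfl | hr
    · rw [h.chg_iff_of_lt_two hb two_pos] at hR
      subst hR
      have hM : M = b ^ e * a - 1 := by have := hd.1; omega
      rcases Nat.lt_or_ge a 2 with ha | ha
      · obtain rfl : a = 1 := by have := hd.2.2.2.1; omega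
        rw [h.up_iff_of_lt_two one_lt_two] at hA
        rw [hA, mul_one, add_zero]
        exact hbound k E (by rwa [hM, mul_one] at hk) hE
      · obtain ⟨E', A', hE', hA', hk⟩ :=
          h.chg_pow_mul_sub_one_lt (hd.one_le_exp hgt.le) ha hd.2.2.2.2.1.le hbound (hM ▸ hk)
        rw [h.chg_unique hE' hE] at hk
        have hA'A : A' < A := h.up_lt_up_succ hA' (by rwa [Nat.sub_add_cancel (by omega)])
        calc k < y ^ E * (A' + 1) := hk
          _ ≤ y ^ E * A + 0 := Nat.mul_le_mul_left _ hA'A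
    · have hdM : BDecomp b M e a (r - 1) := hd.pred_of_rem_pos hr
      obtain ⟨E', A', R', hE', hA', hR', rfl⟩ := (h.chg_iff_of_bDecomp hdM (by omega)).1 hk
      rw [h.chg_unique hE' hE, h.up_unique hA' hA]
      have := IH (r - 1) (by have := hd.rem_lt; omega) hR' (by rwa [Nat.sub_add_cancel hr])
      omega

theorem chg_lt_chg_of_lt (h : IsUpgrade B C Up Chg) (hb : 2 ≤ b) (hub : Up b ub)
    (huby : ub ≤ y) (hjm : j < m) (hk : Chg b y j k) (hk' : Chg b y m k') : k < k' := by
  have hy : ∀ p, Up (b - 1) p → p < y := fun p hp =>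
    lt_of_lt_of_le (h.up_lt_up_succ hp (by rwa [Nat.sub_add_cancel (by omega)])) huby
  induction m, hjm using Nat.le_induction generalizing k' with
  | base => exact h.chg_lt_chg_succ hb hy j hk hk'
  | succ m hjm ih =>
    obtain ⟨km, hkm⟩ := h.exists_chg hb (fun _ hj => h.exists_up_of_le hub hj.le) y m
    exact (ih hkm).trans (h.chg_lt_chg_succ hb hy m hkm hk')

theorem up_iff_isWitness (h : IsUpgrade B C Up Chg) (hb : IsBaseOf B b b) :
    Up b q ↔ IsWitness Up Chg C b b q := by
  rw [h.up_iff_of_le b ⟨b, hb.mem, le_rfl⟩ b hb q]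
  simp only [h.chg_self_iff (h.two_le_of_mem_left b hb.mem), exists_eq_right']

theorem up_le_of_chgGood (h : IsUpgrade B C Up Chg) (hbase : IsBaseOf B n b) (hub : Up b ub)
    (hbm : b ≤ m) (hmn : m ≤ n) (hx : x ∈ C) (hgood : ChgGood Up Chg C m b x) : ub ≤ x := by
  induction m, hbm using Nat.le_induction generalizing x with
  | base =>
    have hw := (h.up_iff_isWitness (hbase.of_le le_rfl (by omega))).1 hub
    exact not_lt.1 fun hlt => hw.2.2 x hx hlt hgood
  | succ m hbm ih =>
    obtain ⟨p, k, hp, hk, hpk, hkS⟩ := hgood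
    obtain ⟨c, hc, hcp⟩ := (h.up_iff_of_le m ⟨b, hbase.mem, hbm⟩ b
      (hbase.of_le hbm (by omega)) p).1 hp
    have hc2 := h.two_le_of_mem_right c hc.1
    have hcp : c ≤ p := h.le_chg (by omega) hbm hcp
    refine (ih (by omega) hc.1 hc.2.1).trans (not_lt.1 fun hxc => ?_)
    obtain ⟨d, hd, hdc⟩ := exists_succIn_le hc.1 hxc
    have := hkS d hd
    omega

theorem exists_up_le_chg (h : IsUpgrade B C Up Chg) (hbase : IsBaseOf B n b) (hy : y ∈ C)
    (hub : Up b ub) (huby : ub ≤ y) (hkn : Chg b y n kn) (hS : ∀ d, SuccIn C y d → kn < d)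
    (hbm : b ≤ m) (hmn : m ≤ n) : ∃ q k, Up m q ∧ Chg b y m k ∧ q ≤ k := by
  have hb := h.two_le_of_mem_left b hbase.mem
  induction m, hbm using Nat.le_induction with
  | base => exact ⟨ub, y, hub, (h.chg_self_iff hb).2 rfl, huby⟩
  | succ m hbm ih =>
    obtain ⟨q, k, hq, hk, hqk⟩ := ih (by omega)
    obtain ⟨k₁, hk₁⟩ := h.exists_chg hb (fun _ hj => h.exists_up_of_le hub hj.le) y (m + 1)
    have hkk₁ : k < k₁ := h.chg_lt_chg_of_lt hb hub huby (by omega) hk hk₁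
    have hk₁kn : k₁ ≤ kn := by
      rcases Nat.lt_or_eq_of_le hmn with hlt | rfl
      · exact (h.chg_lt_chg_of_lt hb hub huby hlt hk₁ hkn).le
      · exact (h.chg_unique hk₁ hkn).le
    have hgood : ChgGood Up Chg C (m + 1) b y :=
      ⟨q, k₁, hq, hk₁, by omega, fun d hd => lt_of_le_of_lt hk₁kn (hS d hd)⟩
    obtain ⟨c, hc, hcy⟩ := exists_isWitness_le hy hgood
    obtain ⟨-, k₂, -, hk₂, -, -⟩ := hc.2.1
    have hc2 := h.two_le_of_mem_right c hc.1
    refine ⟨k₂, k₁, (h.up_iff_of_le (m + 1) ⟨b, hbase.mem, by omega⟩ b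
      (hbase.of_le (by omega) hmn) k₂).2 ⟨c, hc, hk₂⟩, hk₁, ?_⟩
    exact h.chg_le_chg_of_target_le (by omega) hcy hk₂ hk₁

theorem chgGood_of_mem_witnessCandidates (h : IsUpgrade B C Up Chg) (hbase : IsBaseOf B n b)
    (hbn : b ≤ n) (hy : y ∈ witnessCandidates Up Chg C n b) : ChgGood Up Chg C n b y := by
  obtain ⟨hyC, ⟨ub, hub, huby⟩, kn, hkn, hS⟩ := hy
  have hb := h.two_le_of_mem_left b hbase.mem
  rcases Nat.lt_or_eq_of_le hbn with hlt | rfl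
  · obtain ⟨q, k, hq, hk, hqk⟩ :=
      h.exists_up_le_chg hbase hyC hub huby hkn hS (by omega : b ≤ n - 1) (by omega)
    exact ⟨q, kn, hq, hkn, lt_of_le_of_lt hqk (h.chg_lt_chg_of_lt hb hub huby (by omega) hk hkn),
      hS⟩
  · obtain ⟨p, hp⟩ := h.exists_up_of_le hub (Nat.sub_le b 1)
    have hpub : p < ub := h.up_lt_up_succ hp (by rwa [Nat.sub_add_cancel (by omega)])
    rw [(h.chg_self_iff hb).1 hkn] at hS
    exact ⟨p, y, hp, (h.chg_self_iff hb).2 rfl, by omega, hS⟩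

theorem mem_witnessCandidates_of_chgGood (h : IsUpgrade B C Up Chg) (hbase : IsBaseOf B n b)
    (hbn : b ≤ n) (hub : Up b ub) (hx : x ∈ C) (hgood : ChgGood Up Chg C n b x) :
    x ∈ witnessCandidates Up Chg C n b := by
  have hubx := h.up_le_of_chgGood hbase hub hbn le_rfl hx hgood
  obtain ⟨-, k, -, hk, -, hS⟩ := hgood
  exact ⟨hx, ⟨ub, hub, hubx⟩, k, hk, hS⟩

theorem isWitness_iff_isLeast (h : IsUpgrade B C Up Chg) (hbase : IsBaseOf B n b)
    (hbn : b ≤ n) {c : ℕ} :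
    IsWitness Up Chg C n b c ↔ IsLeast (witnessCandidates Up Chg C n b) c := by
  constructor
  · intro hc
    obtain ⟨-, k, -, hk, -, -⟩ := hc.2.1
    have hupn : Up n k := (h.up_iff_of_le n ⟨b, hbase.mem, hbn⟩ b hbase k).2 ⟨c, hc, hk⟩
    obtain ⟨ub, hub⟩ := h.exists_up_of_le hupn hbn
    refine ⟨h.mem_witnessCandidates_of_chgGood hbase hbn hub hc.1 hc.2.1, fun y hy => ?_⟩
    exact not_lt.1 fun hyc =>
      hc.2.2 y hy.1 hyc (h.chgGood_of_mem_witnessCandidates hbase hbn hy)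
  · rintro ⟨hc, hmin⟩
    refine ⟨hc.1, h.chgGood_of_mem_witnessCandidates hbase hbn hc, fun x hx hxc hgood => ?_⟩
    obtain ⟨-, ⟨ub, hub, -⟩, -⟩ := hc
    exact absurd (hmin (h.mem_witnessCandidates_of_chgGood hbase hbn hub hx hgood)) (not_le.2 hxc)

end IsUpgrade

theorem stmt18_general (B C : Set ℕ) (hB : IsBaseHierarchy B) (hC : IsBaseHierarchy C)
    (Up : ℕ → ℕ → Prop) (Chg : ℕ → ℕ → ℕ → ℕ → Prop)
    (hUp_small : ∀ n m, (∀ x ∈ B, n < x) → (Up n m ↔ m = n))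
    (hChg_small : ∀ b c m k, m < b → (Chg b c m k ↔ Up m k))
    (hChg_big : ∀ b c m k, b ≤ m →
      (Chg b c m k ↔ ∃ e a r, BDecomp b m e a r ∧
        ∃ e' a' r', Chg b c e e' ∧ Up a a' ∧ Chg b c r r' ∧
          k = c ^ e' * a' + r'))
    (hUp_big : ∀ n, (∃ x ∈ B, x ≤ n) → ∀ b, IsBaseOf B n b → ∀ m,
      (Up n m ↔ ∃ c, IsWitness Up Chg C n b c ∧ Chg b c n m))
    (n b : ℕ) (hn : ∃ x ∈ B, x ≤ n) (hb : IsBaseOf B n b) :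
    ((∃ c, IsWitness Up Chg C n b c) ↔
      ∃ c', IsLeast {x | x ∈ C ∧ (∃ ub, Up b ub ∧ ub ≤ x) ∧
        ∃ k, Chg b x n k ∧ ∀ d, SuccIn C x d → k < d} c') ∧
    (∀ c c', IsWitness Up Chg C n b c →
      IsLeast {x | x ∈ C ∧ (∃ ub, Up b ub ∧ ub ≤ x) ∧
        ∃ k, Chg b x n k ∧ ∀ d, SuccIn C x d → k < d} c' → c' = c) := by
  have h : IsUpgrade B C Up Chg := ⟨hB.2.1, hC.2.1, hUp_small, hChg_small, hChg_big, hUp_big⟩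
  have hiff (c : ℕ) := h.isWitness_iff_isLeast hb (hb.le hn) (c := c)
  exact ⟨exists_congr hiff, fun c _ hc hc' => hc'.unique ((hiff c).1 hc)⟩

/-- Let `B, C` be base hierarchies with `min B ≤ min C`,
`n ≥ min B` and `b = base_B(n)`.  The (partial) upgrade `↑ = ↑_B^C` and base
change `⌈b→c⌉` are modelled as relations `Up`, `Chg` characterized by their
defining equations.  Then the witness `c` for `↑n` exists iff there is a least
`c' ∈ C` with `c' ≥ ↑b` and `⌈b→c'⌉(n) < S_C(c')`, and in that case `c' = c`. -/
theorem stmt18 (B C : Set ℕ) (hB : IsBaseHierarchy B) (hC : IsBaseHierarchy C)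
    (hmin : ∀ mB mC, IsLeast B mB → IsLeast C mC → mB ≤ mC)
    (Up : ℕ → ℕ → Prop) (Chg : ℕ → ℕ → ℕ → ℕ → Prop)
    (hUp_small : ∀ n m, (∀ x ∈ B, n < x) → (Up n m ↔ m = n))
    (hChg_small : ∀ b c m k, m < b → (Chg b c m k ↔ Up m k))
    (hChg_big : ∀ b c m k, b ≤ m →
      (Chg b c m k ↔ ∃ e a r, BDecomp b m e a r ∧
        ∃ e' a' r', Chg b c e e' ∧ Up a a' ∧ Chg b c r r' ∧
          k = c ^ e' * a' + r'))
    (hUp_big : ∀ n, (∃ x ∈ B, x ≤ n) → ∀ b, IsBaseOf B n b → ∀ m,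
      (Up n m ↔ ∃ c, IsWitness Up Chg C n b c ∧ Chg b c n m))
    (n b : ℕ) (hn : ∃ x ∈ B, x ≤ n) (hb : IsBaseOf B n b) :
    ((∃ c, IsWitness Up Chg C n b c) ↔
      ∃ c', IsLeast {x | x ∈ C ∧ (∃ ub, Up b ub ∧ ub ≤ x) ∧
        ∃ k, Chg b x n k ∧ ∀ d, SuccIn C x d → k < d} c') ∧
    (∀ c c', IsWitness Up Chg C n b c →
      IsLeast {x | x ∈ C ∧ (∃ ub, Up b ub ∧ ub ≤ x) ∧
        ∃ k, Chg b x n k ∧ ∀ d, SuccIn C x d → k < d} c' → c' = c) :=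
  stmt18_general B C hB hC Up Chg hUp_small hChg_small hChg_big hUp_big n b hn hb
end
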